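/- arXiv:1604.08049 — 4 statements merged into one kernel-verified Lean document; each statement's English description precedes it below -/
import Mathlib

section
/- There exists a unique multilinear symmetric map sgn : (ℤ^n)^(n+1) → ℤ/2ℤ such that for all l₁,…,lₙ ∈ ℤ^n one has sgn(l₁,l₁,l₂,…,lₙ) ≡ det(l₁,l₂,…,lₙ) (mod 2). -/
/-! Over `ZMod 2`, for every set `T` of coordinates the map `v ↦ ∏ⱼ ∑_{k ∈ T} vⱼₖ` is
multilinear and symmetric, and so is their sum `parityForm` over all `T`. Since `x² = x` in
`ZMod 2`, `parityForm (l₁, l₁, l₂, …, lₙ) = ∑_T ∏ᵢ ∑_{k ∈ T} lᵢₖ`; expanding the product, a map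
`g : [n] → [n]` contributes once for each `T ⊇ im g`, an even number of times unless `g` is a
permutation, so the sum is the permanent, which in characteristic `2` is the determinant.

Uniqueness: a multilinear map on `(ℤⁿ)ⁿ⁺¹` is determined by its values on tuples of basis vectors,
and by pigeonhole each of them has a repeated entry; by symmetry the repetition can be moved to the
first two places, where the value is prescribed. -/

open Finset Function

namespace CharTwo

variable {R ι : Type*} [Fintype ι] [DecidableEq ι]

theorem sum_ite_subset_eq_zero [Semiring R] [CharP R 2] {s : Finset ι} {m : ι}
    (hm : m ∉ s) (c : R) : ∑ T : Finset ι, (if s ⊆ T then c else 0) = 0 := by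
  rw [← powerset_univ, ← insert_erase (mem_univ m), sum_powerset_insert (notMem_erase m _),
    ← sum_add_distrib]
  simp_rw [subset_insert_iff_of_notMem hm, add_self_eq_zero, sum_const_zero]

theorem _root_.Matrix.permanent_eq_det [CommRing R] [CharP R 2]
    (A : Matrix ι ι R) : A.permanent = A.det := by
  rw [Matrix.det_apply, Matrix.permanent]
  refine sum_congr rfl fun σ _ => ?_
  rcases Int.units_eq_one_or (Equiv.Perm.sign σ) with h | h <;> simp [h, neg_eq]

theorem sum_prod_sum_eq_permanent [CommSemiring R] [CharP R 2] (A : ι → ι → R) :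
    ∑ T : Finset ι, ∏ i, ∑ k ∈ T, A i k = (Matrix.of A).permanent := by
  have expand (T : Finset ι) : ∏ i, ∑ k ∈ T, A i k =
      ∑ g : ι → ι, if image g univ ⊆ T then ∏ i, A i (g i) else 0 := by
    rw [prod_univ_sum, ← sum_filter]
    refine sum_congr ?_ fun _ _ => rfl
    ext g
    simp [Fintype.mem_piFinset, image_subset_iff]
  have collect (g : ι → ι) : ∑ T : Finset ι, (if image g univ ⊆ T then ∏ i, A i (g i) else 0) =
      if Surjective g then ∏ i, A i (g i) else 0 := by
    split_ifs with hg
    · simp [univ_subset_iff, image_univ_of_surjective hg]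
    · obtain ⟨m, hm⟩ := not_forall.mp hg
      exact sum_ite_subset_eq_zero (by simpa using hm) _
  simp_rw [expand]
  rw [sum_comm]
  simp_rw [collect]
  rw [← sum_filter, ← Matrix.permanent_transpose, Matrix.permanent]
  refine (sum_bij (fun (σ : Equiv.Perm ι) _ => ⇑σ) (fun σ _ => by simpa using σ.surjective)
    (fun _ _ _ _ h => Equiv.coe_fn_injective h) (fun g hg => ?_) fun _ _ => rfl).symm
  have hg : g.Bijective := Finite.surjective_iff_bijective.mp (by simpa using hg)
  exact ⟨Equiv.ofBijective g hg, mem_univ _, rfl⟩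

end CharTwo

theorem eq_of_not_injective_of_comp_perm {α M N : Type*} [Finite α] {f g : (α → M) → N}
    (hf : ∀ v (σ : Equiv.Perm α), f (v ∘ σ) = f v) (hg : ∀ v (σ : Equiv.Perm α), g (v ∘ σ) = g v)
    {a b : α} (hab : a ≠ b) (hfg : ∀ v, v a = v b → f v = g v) {v : α → M} (hv : ¬Injective v) :
    f v = g v := by
  obtain ⟨a', b', hv', hab'⟩ := not_injective_iff.mp hv
  obtain ⟨σ, hσ⟩ := Equiv.Perm.exists_extending_pair ![a, b] ![a', b']
    (by simp [Injective, Fin.forall_fin_two, hab, hab.symm])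
    (by simp [Injective, Fin.forall_fin_two, hab', hab'.symm])
  have ha : σ a = a' := hσ 0
  have hb : σ b = b' := hσ 1
  rw [← hf v σ, ← hg v σ]
  exact hfg _ (by simp [ha, hb, hv'])

theorem MultilinearMap.ext_of_card_lt {R M N ι κ : Type*} [CommSemiring R] [AddCommMonoid M]
    [Module R M] [AddCommMonoid N] [Module R N] [Fintype ι] [Fintype κ] (b : Module.Basis κ R M)
    (hcard : Fintype.card κ < Fintype.card ι) {f g : MultilinearMap R (fun _ : ι => M) N}
    (hfg : ∀ v : ι → M, ¬Injective v → f v = g v) : f = g :=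
  Module.Basis.ext_multilinear (fun _ => b) fun j => hfg _ fun hinj =>
    hcard.not_ge (Fintype.card_le_of_injective j (Injective.of_comp hinj))

def MultilinearMap.ofIntAdditive {ι : Type*} [inst : DecidableEq ι] {M : ι → Type*}
    [∀ i, AddCommGroup (M i)] {N : Type*} [AddCommGroup N] (f : (∀ i, M i) → N)
    (hf : ∀ v i x y, f (update v i (x + y)) = f (update v i x) + f (update v i y)) :
    MultilinearMap ℤ M N where
  toFun := f
  map_update_add' v i x y := by convert hf v i x y
  map_update_smul' {dec} v i c x := by
    obtain rfl : dec = inst := Subsingleton.elim _ _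
    exact (AddMonoidHom.mk' (fun z => f (update v i z)) (hf v i)).map_zsmul c x

def parityForm (κ ι : Type*) [Fintype κ] [Fintype ι] :
    MultilinearMap ℤ (fun _ : κ => ι → ℤ) (ZMod 2) :=
  ∑ T : Finset ι, (MultilinearMap.mkPiAlgebra ℤ κ (ZMod 2)).compLinearMap fun _ =>
    (∑ k ∈ T, (Int.castAddHom (ZMod 2)).comp (Pi.evalAddMonoidHom _ k)).toIntLinearMap

section parityForm

variable {κ ι : Type*} [Fintype κ] [Fintype ι]

theorem parityForm_apply (v : κ → ι → ℤ) :
    parityForm κ ι v = ∑ T : Finset ι, ∏ j, ∑ k ∈ T, (v j k : ZMod 2) := by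
  simp [parityForm]

theorem parityForm_comp_perm (v : κ → ι → ℤ) (σ : Equiv.Perm κ) :
    parityForm κ ι (v ∘ σ) = parityForm κ ι v := by
  simp only [parityForm_apply]
  exact sum_congr rfl fun T _ => Equiv.prod_comp σ fun j => ∑ k ∈ T, (v j k : ZMod 2)

end parityForm

theorem parityForm_cons {n : ℕ} (l : Fin n → Fin n → ℤ) (i : Fin n) :
    parityForm (Fin (n + 1)) (Fin n) (Fin.cons (l i) l) =
      (((Matrix.of fun i j => l j i).det : ℤ) : ZMod 2) := by
  have hsq (T : Finset (Fin n)) :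
      ∏ j, ∑ k ∈ T, ((Fin.cons (l i) l : Fin (n + 1) → Fin n → ℤ) j k : ZMod 2) =
        ∏ j, ∑ k ∈ T, (l j k : ZMod 2) := by
    rw [Fin.prod_univ_succ]
    simp only [Fin.cons_zero, Fin.cons_succ]
    rw [← mul_prod_erase _ _ (mem_univ i), ← mul_assoc, ← sq, ZMod.pow_card]
  rw [parityForm_apply]
  simp_rw [hsq]
  rw [CharTwo.sum_prod_sum_eq_permanent, Matrix.permanent_eq_det, Int.cast_det,
    ← Matrix.det_transpose]
  rfl

/-- There exists a unique multilinear (additive in each argument) symmetric map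
`sgn : (ℤ^n)^(n+1) → ℤ/2ℤ` such that for all `l₁,…,lₙ ∈ ℤ^n` one has
`sgn(l₁,l₁,l₂,…,lₙ) ≡ det(l₁,l₂,…,lₙ) (mod 2)`. -/
theorem stmt0 (n : ℕ) (hn : 1 ≤ n) :
    ∃! s : (Fin (n + 1) → (Fin n → ℤ)) → ZMod 2,
      (∀ (v : Fin (n + 1) → Fin n → ℤ) (i : Fin (n + 1)) (x y : Fin n → ℤ),
        s (Function.update v i (x + y)) =
          s (Function.update v i x) + s (Function.update v i y)) ∧
      (∀ (v : Fin (n + 1) → Fin n → ℤ) (σ : Equiv.Perm (Fin (n + 1))),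
        s (v ∘ σ) = s v) ∧
      (∀ l : Fin n → (Fin n → ℤ),
        s (Fin.cons (l ⟨0, hn⟩) l) =
          (((Matrix.of fun i j => l j i).det : ℤ) : ZMod 2)) := by
  obtain ⟨m, rfl⟩ : ∃ m, n = m + 1 := ⟨n - 1, by omega⟩
  refine ⟨parityForm _ _, ⟨(parityForm _ _).map_update_add, parityForm_comp_perm,
    fun l => parityForm_cons l _⟩, ?_⟩
  rintro s ⟨hadd, hperm, hdet⟩
  have hrep (v : Fin (m + 2) → Fin (m + 1) → ℤ) (hv : v 0 = v 1) : s v = parityForm _ _ v := by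
    have hv : v 0 = Fin.tail v ⟨0, hn⟩ := hv
    rw [← Fin.cons_self_tail v, hv, hdet, parityForm_cons]
  have hs := MultilinearMap.ext_of_card_lt (Pi.basisFun ℤ (Fin (m + 1))) (by simp)
    (f := MultilinearMap.ofIntAdditive s hadd) (g := parityForm _ _) fun v hv =>
      eq_of_not_injective_of_comp_perm hperm parityForm_comp_perm zero_ne_one hrep hv
  exact congrArg DFunLike.coe hs
end

section
/- Any map sgn : (ℤ^n)^(n+1) → ℤ/2ℤ that is multilinear, symmetric, and satisfies sgn(l₁,l₁,l₂,…,lₙ) ≡ det(l₁,…,lₙ) (mod 2) for all lᵢ ∈ ℤ^n, is invariant under the diagonal action of GLₙ(ℤ): for every A ∈ GLₙ(ℤ), sgn(A·l₁,…,A·l_{n+1}) = sgn(l₁,…,l_{n+1}). -/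
/-! Reduced mod 2, the `n + 1` vectors `vₖ` are linearly dependent over `𝔽₂`, so
`∑ k ∈ K, vₖ = 2 w` for some nonempty `K`. Pick `k₀ ∈ K` and expand `s v` by additivity in the
slot `k₀`: since `s (…, 2 w, …) = 0` in `ℤ/2`, `s v` is the sum over `k ∈ K \ {k₀}` of `s` at `v`
with `vₖ` put in slot `k₀`, and each such term has a repeated vector, so equals
`det (vₖ)_{k ≠ k₀}` mod 2. The vectors `A vₖ` satisfy the same relation with the same `K`, and
`det (A M) ≡ det M` mod 2 because `det A = ±1`. -/

open Function Finset

section SlotAdditive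

variable {ι M : Type*} [DecidableEq ι] [AddCommMonoid M] {s : (ι → M) → ZMod 2}
    (hadd : ∀ (v : ι → M) (i : ι) (x y : M),
      s (update v i (x + y)) = s (update v i x) + s (update v i y))
include hadd

def slotAddMonoidHom (v : ι → M) (i : ι) : M →+ ZMod 2 :=
  AddMonoidHom.mk' (fun x => s (update v i x)) (hadd v i)

theorem eq_sum_update_of_sum_eq_two_nsmul (v : ι → M) {K : Finset ι} {k₀ : ι} (hk₀ : k₀ ∈ K)
    {w : M} (hw : ∑ k ∈ K, v k = 2 • w) :
    s v = ∑ k ∈ K.erase k₀, s (update v k₀ (v k)) := by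
  set f := slotAddMonoidHom hadd v k₀
  have hsum : f (v k₀) + ∑ k ∈ K.erase k₀, f (v k) = 0 := by
    rw [← map_sum, ← map_add, add_sum_erase K v hk₀, hw, map_nsmul, CharTwo.two_nsmul]
  rw [CharTwo.add_eq_zero] at hsum
  simpa [f, slotAddMonoidHom] using hsum

end SlotAdditive

theorem exists_sum_eq_two_nsmul {ι κ : Type*} [Fintype ι] [Fintype κ] (v : ι → κ → ℤ)
    (hcard : Fintype.card κ < Fintype.card ι) :
    ∃ K : Finset ι, K.Nonempty ∧ ∃ w : κ → ℤ, ∑ k ∈ K, v k = 2 • w := by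
  classical
  have hdep : ¬ LinearIndependent (ZMod 2) fun k j => (v k j : ZMod 2) := fun h => by
    simpa [Module.finrank_pi] using (h.fintype_card_le_finrank.trans_lt' hcard).ne'
  obtain ⟨g, hg, k₀, hgk₀⟩ := Fintype.not_linearIndependent_iff.mp hdep
  set K := univ.filter (g · ≠ 0)
  have heven (j : κ) : 2 ∣ ∑ k ∈ K, v k j := by
    refine (ZMod.intCast_zmod_eq_zero_iff_dvd _ 2).mp ?_
    have hgj := congrFun hg j
    rw [Finset.sum_apply, Pi.zero_apply] at hgj
    rw [Int.cast_sum, ← hgj, sum_filter]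
    refine sum_congr rfl fun k _ => ?_
    obtain h | h : g k = 0 ∨ g k = 1 := by generalize g k = a; decide +revert
    all_goals simp [h]
  refine ⟨K, ⟨k₀, by simpa [K] using hgk₀⟩, fun j => (∑ k ∈ K, v k j) / 2, ?_⟩
  ext j
  simpa using (Int.mul_ediv_cancel' (heven j)).symm

theorem intCast_det_mul_of_isUnit {m : Type*} [Fintype m] [DecidableEq m] {A : Matrix m m ℤ}
    (hA : IsUnit A.det) (B : Matrix m m ℤ) : (((A * B).det : ℤ) : ZMod 2) = B.det := by
  rcases Int.isUnit_iff.mp hA with h | h <;> simp [Matrix.det_mul, h, CharTwo.neg_eq]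

theorem intCast_det_comp_perm {n : ℕ} (l : Fin n → Fin n → ℤ) (σ : Equiv.Perm (Fin n)) :
    (((Matrix.of fun i j => (l ∘ σ) j i).det : ℤ) : ZMod 2) =
      (Matrix.of fun i j => l j i).det := by
  have := Matrix.det_permute' σ (Matrix.of fun i j => l j i)
  rcases Int.units_eq_one_or (Equiv.Perm.sign σ) with h | h <;>
    simp_all [Matrix.submatrix, CharTwo.neg_eq]

section Symmetric

variable {n : ℕ} {α β : Type*} {s : (Fin (n + 1) → α) → β}
    (hsym : ∀ (v : Fin (n + 1) → α) (σ : Equiv.Perm (Fin (n + 1))), s (v ∘ σ) = s v)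
include hsym

theorem apply_cons_comp_perm (x : α) (l : Fin n → α) (σ : Equiv.Perm (Fin n)) :
    s (Fin.cons x (l ∘ σ)) = s (Fin.cons x l) := by
  rw [← hsym (Fin.cons x l) (Equiv.Perm.decomposeFin.symm (0, σ))]
  congr 1
  ext k
  cases k using Fin.cases <;> simp

theorem apply_insertNth_eq_apply_cons (p : Fin (n + 1)) (x : α) (l : Fin n → α) :
    s (p.insertNth x l) = s (Fin.cons x l) := by
  rw [← Fin.cons_comp_cycleRange, hsym]

end Symmetric

section DetCondition

variable {n : ℕ} (hn : 1 ≤ n) {s : (Fin (n + 1) → (Fin n → ℤ)) → ZMod 2}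
    (hsym : ∀ (v : Fin (n + 1) → Fin n → ℤ) (σ : Equiv.Perm (Fin (n + 1))), s (v ∘ σ) = s v)
    (hdet : ∀ l : Fin n → (Fin n → ℤ),
      s (Fin.cons (l ⟨0, hn⟩) l) = (((Matrix.of fun i j => l j i).det : ℤ) : ZMod 2))
include hsym hdet

theorem apply_insertNth_eq_det (p : Fin (n + 1)) (l : Fin n → Fin n → ℤ) (j : Fin n) :
    s (p.insertNth (l j) l) = (((Matrix.of fun i j => l j i).det : ℤ) : ZMod 2) := by
  set τ := Equiv.swap ⟨0, hn⟩ j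
  have hτ : (l ∘ τ) ⟨0, hn⟩ = l j := by simp [τ]
  rw [apply_insertNth_eq_apply_cons hsym, ← intCast_det_comp_perm l τ, ← hdet, hτ,
    apply_cons_comp_perm hsym]

theorem apply_eq_card_nsmul_det
    (hadd : ∀ (v : Fin (n + 1) → Fin n → ℤ) (i : Fin (n + 1)) (x y : Fin n → ℤ),
      s (update v i (x + y)) = s (update v i x) + s (update v i y))
    (v : Fin (n + 1) → Fin n → ℤ) {K : Finset (Fin (n + 1))} {k₀ : Fin (n + 1)} (hk₀ : k₀ ∈ K)
    {w : Fin n → ℤ} (hw : ∑ k ∈ K, v k = 2 • w) :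
    s v = #(K.erase k₀) • (((Matrix.of fun i j => v (k₀.succAbove j) i).det : ℤ) : ZMod 2) := by
  rw [eq_sum_update_of_sum_eq_two_nsmul hadd v hk₀ hw, ← sum_const]
  refine sum_congr rfl fun k hk => ?_
  obtain ⟨j, rfl⟩ := Fin.exists_succAbove_eq (ne_of_mem_erase hk)
  rw [← Fin.insertNth_removeNth]
  exact apply_insertNth_eq_det hn hsym hdet k₀ (k₀.removeNth v) j

end DetCondition

/-- Any map `sgn : (ℤ^n)^(n+1) → ℤ/2ℤ` that is multilinear (additive in each
argument), symmetric, and satisfies `sgn(l₁,l₁,l₂,…,lₙ) ≡ det(l₁,…,lₙ) (mod 2)`, is invariant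
under the diagonal action of `GLₙ(ℤ)`. -/
theorem stmt1 (n : ℕ) (hn : 1 ≤ n)
    (s : (Fin (n + 1) → (Fin n → ℤ)) → ZMod 2)
    (hadd : ∀ (v : Fin (n + 1) → Fin n → ℤ) (i : Fin (n + 1)) (x y : Fin n → ℤ),
      s (Function.update v i (x + y)) =
        s (Function.update v i x) + s (Function.update v i y))
    (hsym : ∀ (v : Fin (n + 1) → Fin n → ℤ) (σ : Equiv.Perm (Fin (n + 1))),
      s (v ∘ σ) = s v)
    (hdet : ∀ l : Fin n → (Fin n → ℤ),
      s (Fin.cons (l ⟨0, hn⟩) l) = (((Matrix.of fun i j => l j i).det : ℤ) : ZMod 2)) :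
    ∀ (A : GL (Fin n) ℤ) (v : Fin (n + 1) → Fin n → ℤ),
      s (fun i => (A : Matrix (Fin n) (Fin n) ℤ).mulVec (v i)) = s v := by
  intro A v
  obtain ⟨K, ⟨k₀, hk₀⟩, w, hw⟩ := exists_sum_eq_two_nsmul v (by simp)
  have hAw : ∑ k ∈ K, (A : Matrix (Fin n) (Fin n) ℤ).mulVec (v k) =
      2 • (A : Matrix (Fin n) (Fin n) ℤ).mulVec w := by
    rw [← Matrix.mulVec_sum, hw, Matrix.mulVec_smul]
  have hmat :
      (Matrix.of fun i j => (A : Matrix (Fin n) (Fin n) ℤ).mulVec (v (k₀.succAbove j)) i) =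
        A * Matrix.of fun i j => v (k₀.succAbove j) i := by
    ext i j
    simp [Matrix.mul_apply, Matrix.mulVec, dotProduct]
  rw [apply_eq_card_nsmul_det hn hsym hdet hadd v hk₀ hw,
    apply_eq_card_nsmul_det hn hsym hdet hadd _ hk₀ hAw, hmat,
    intCast_det_mul_of_isUnit ((Matrix.isUnit_iff_isUnit_det _).mp A.isUnit)]
end

section
/- Let L be a free ℤ-module of rank 2n with basis {e₁,…,eₙ,x₁,…,xₙ}. For each pair (K,κ) with K ⊆ {1,…,n} and κ : K → {1,…,n} an order-preserving injection, define v_{(K,κ)} = v₁ ∧ … ∧ vₙ ∈ Λ^n L where vᵢ = eᵢ if i ∉ K and vᵢ = eᵢ + x_{κ(i)} if i ∈ K. Then the family {v_{(K,κ)}} indexed by all such pairs is a basis of the ℤ-module Λ^n L. -/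
/-!
Up to sign, the wedges `⋀_{s ∈ S} s` over the `n`-element subsets `S` of `{e₁,…,eₙ,x₁,…,xₙ}`
form a basis of `Λ^n L`, and `(K, κ) ↦ S_{(K,κ)} = {eᵢ : i ∉ K} ∪ {x_{κ(i)} : i ∈ K}` is a
bijection onto these subsets (`κ` is recovered as the increasing map onto the `x`-part of `S`).
The coordinate of `v_{(K',κ')}` at `S_{(K,κ)}` is the minor of the matrix of `v_{(K',κ')}` on
these columns: it is `1` for `(K',κ') = (K,κ)` and `0` whenever `|K'| ≤ |K|` otherwise (a zero
column, or two equal columns). So the change of basis is block unitriangular for the grading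
by `|K|`, hence invertible over `ℤ`.
-/

open ExteriorAlgebra

/-- The index set `𝒦`: pairs `(K, κ)` where `K ⊆ {1,…,n}` and `κ : K → {1,…,n}` is an
order-preserving (strictly monotone) injection. -/
def KIdx (n : ℕ) : Type :=
  Σ K : Finset (Fin n), {κ : {x // x ∈ K} → Fin n // StrictMono κ}

/-- The basis vector `eᵢ` of `L = ℤ^n ⊕ ℤ^n`. -/
def eVec (n : ℕ) (i : Fin n) : (Fin n ⊕ Fin n) → ℤ := Pi.single (Sum.inl i) 1

/-- The basis vector `xᵢ` of `L = ℤ^n ⊕ ℤ^n`. -/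
def xVec (n : ℕ) (i : Fin n) : (Fin n ⊕ Fin n) → ℤ := Pi.single (Sum.inr i) 1

/-- The vector entries of `v_{(K,κ)} = v₁ ∧ … ∧ vₙ`: `vᵢ = eᵢ` if `i ∉ K` and
`vᵢ = eᵢ + x_{κ(i)}` if `i ∈ K`. -/
def vFun (n : ℕ) (p : KIdx n) : Fin n → ((Fin n ⊕ Fin n) → ℤ) := fun i =>
  if h : i ∈ p.1 then eVec n i + xVec n (p.2.1 ⟨i, h⟩) else eVec n i

open Set.powersetCard

theorem Function.Injective.exists_perm_eq_comp {α : Type*} {n : ℕ} {f g : Fin n → α}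
    (hf : Injective f) (hg : Injective g) (h : Set.range f = Set.range g) :
    ∃ σ : Equiv.Perm (Fin n), f = g ∘ σ :=
  ⟨(Equiv.ofInjective f hf).trans ((Equiv.setCongr h).trans (Equiv.ofInjective g hg).symm),
    funext fun x => by simp [Equiv.apply_ofInjective_symm]⟩

namespace Module.Basis

variable {R M I ι : Type*} [CommRing R] [AddCommGroup M] [Module R M] {n : ℕ}

theorem exists_basis_exteriorPower_ιMulti_comp (b : Basis I R M)
    (e : ι ≃ Set.powersetCard I n) (c : ι → Fin n → I) (hc_inj : ∀ p, Function.Injective (c p))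
    (hc : ∀ p, Set.range (c p) = e p) :
    ∃ w : Basis ι R (⋀[R]^n M), ∀ p, w p = exteriorPower.ιMulti R n (b ∘ c p) := by
  classical
  -- Any linear order on `I` yields the basis `b.exteriorPower n`; each `c p` enumerates the
  -- corresponding subset up to a permutation, which only costs a sign.
  let : LinearOrder I := linearOrderOfSTO WellOrderingRel
  have hσ (p : ι) : ∃ σ : Equiv.Perm (Fin n), c p = ofFinEmbEquiv.symm (e p) ∘ σ :=
    (hc_inj p).exists_perm_eq_comp (ofFinEmbEquiv.symm (e p)).injective <| by
      ext i; rw [hc, mem_range_ofFinEmbEquiv_symm_iff_mem]; rfl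
  choose σ hσ using hσ
  refine ⟨((b.exteriorPower n).reindex e.symm).unitsSMul
    fun p => Units.map (Int.castRingHom R) (Equiv.Perm.sign (σ p)), fun p => ?_⟩
  rw [unitsSMul_apply, reindex_apply, Equiv.symm_symm, exteriorPower.basis_apply, hσ p,
    ← Function.comp_assoc, AlternatingMap.map_perm]
  simp only [Units.smul_def, Units.coe_map, MonoidHom.coe_coe, eq_intCast, Int.cast_smul_eq_zsmul]
  rfl

theorem coord_eq_alternatingMapToDual (b : Basis I R M) (e : ι ≃ Set.powersetCard I n)
    (c : ι → Fin n → I) (hc_inj : ∀ p, Function.Injective (c p))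
    (hc : ∀ p, Set.range (c p) = e p)
    (w : Basis ι R (⋀[R]^n M)) (hw : ∀ p, w p = exteriorPower.ιMulti R n (b ∘ c p)) (p : ι) :
    w.coord p = exteriorPower.alternatingMapToDual R M n (fun j => b.coord (c p j)) := by
  classical
  refine w.ext fun q => ?_
  rw [coord_apply, repr_self, hw, exteriorPower.alternatingMapToDual_apply_ιMulti]
  simp only [Function.comp_apply, coord_apply, repr_self, Finsupp.single_apply]
  obtain rfl | hqp := eq_or_ne q p
  · rw [if_pos rfl, ← Matrix.det_one (n := Fin n) (R := R)]
    congr 1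
    ext i j
    simp [Matrix.one_apply, (hc_inj q).eq_iff]
  · rw [if_neg hqp]
    obtain ⟨x, hxp, hxq⟩ := (exists_mem_notMem_iff_ne _ _).mp (e.injective.ne hqp.symm)
    obtain ⟨j, rfl⟩ : x ∈ Set.range (c p) := by rw [hc]; exact hxp
    refine (Matrix.det_eq_zero_of_column_eq_zero j fun i => ?_).symm
    rw [Matrix.of_apply, if_neg]
    rintro h
    exact hxq (show c p j ∈ (e q : Set I) from hc q ▸ ⟨i, h⟩)

theorem exists_basis_of_isUnit_det_minors [Fintype ι] [DecidableEq ι] (b : Basis I R M)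
    (e : ι ≃ Set.powersetCard I n) (c : ι → Fin n → I) (hc_inj : ∀ p, Function.Injective (c p))
    (hc : ∀ p, Set.range (c p) = e p) (v : ι → ⋀[R]^n M)
    (hv : IsUnit (Matrix.of fun p q =>
      exteriorPower.alternatingMapToDual R M n (fun j => b.coord (c p j)) (v q)).det) :
    ∃ w : Basis ι R (⋀[R]^n M), ⇑w = v := by
  obtain ⟨w₀, hw₀⟩ := b.exists_basis_exteriorPower_ιMulti_comp e c hc_inj hc
  have hdet : w₀.det v = (Matrix.of fun p q =>
      exteriorPower.alternatingMapToDual R M n (fun j => b.coord (c p j)) (v q)).det := by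
    rw [det_apply]
    congr
    ext p q
    rw [toMatrix_apply, ← coord_apply, b.coord_eq_alternatingMapToDual e c hc_inj hc w₀ hw₀,
      Matrix.of_apply]
  obtain ⟨hli, hspan⟩ := (is_basis_iff_det w₀).mpr (hdet ▸ hv)
  exact ⟨Basis.mk hli hspan.ge, Basis.coe_mk _ _⟩

end Module.Basis

theorem Matrix.det_eq_one_of_forall_le {R m α : Type*} [CommRing R] [Fintype m] [DecidableEq m]
    [LinearOrder α] (A : Matrix m m R) (f : m → α)
    (hA : ∀ i j, f j ≤ f i → A i j = (1 : Matrix m m R) i j) : A.det = 1 := by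
  have hblock : A.BlockTriangular f := fun i j h => by
    rw [hA i j h.le, one_apply_ne]
    rintro rfl
    exact lt_irrefl _ h
  rw [hblock.det]
  refine Finset.prod_eq_one fun a _ => ?_
  have : A.toSquareBlock f a = 1 := by
    ext ⟨i, hi⟩ ⟨j, hj⟩
    rw [toSquareBlock_def, of_apply, hA i j (hj.trans hi.symm).le]
    simp [one_apply]
  rw [this, det_one]

namespace KIdx

variable {n : ℕ}

instance : Fintype (KIdx n) :=
  inferInstanceAs (Fintype (Σ K : Finset (Fin n), {κ : {x // x ∈ K} → Fin n // StrictMono κ}))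

instance : DecidableEq (KIdx n) :=
  inferInstanceAs (DecidableEq (Σ K : Finset (Fin n), {κ : {x // x ∈ K} → Fin n // StrictMono κ}))

def pivot (p : KIdx n) (i : Fin n) : Fin n ⊕ Fin n :=
  if h : i ∈ p.1 then .inr (p.2.1 ⟨i, h⟩) else .inl i

theorem pivot_injective (p : KIdx n) : Function.Injective p.pivot := by
  intro i j hij
  unfold pivot at hij
  split_ifs at hij with hi hj
  · exact congrArg Subtype.val (p.2.2.injective (Sum.inr_injective hij))
  · exact Sum.inl_injective hij

theorem inl_mem_range_pivot {p : KIdx n} {i : Fin n} :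
    Sum.inl i ∈ Set.range p.pivot ↔ i ∉ p.1 := by
  constructor
  · rintro ⟨j, hj⟩
    unfold pivot at hj
    split_ifs at hj with h
    exact Sum.inl_injective hj ▸ h
  · exact fun h => ⟨i, dif_neg h⟩

theorem inr_mem_range_pivot {p : KIdx n} {b : Fin n} :
    Sum.inr b ∈ Set.range p.pivot ↔ b ∈ Set.range p.2.1 := by
  constructor
  · rintro ⟨j, hj⟩
    unfold pivot at hj
    split_ifs at hj with h
    exact ⟨_, Sum.inr_injective hj⟩
  · rintro ⟨⟨i, hi⟩, rfl⟩
    exact ⟨i, dif_pos hi⟩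

theorem ext_of_range_eq {p q : KIdx n} (hK : p.1 = q.1)
    (hκ : Set.range p.2.1 = Set.range q.2.1) : p = q := by
  obtain ⟨K, κ, hκmono⟩ := p
  obtain ⟨K', κ', hκ'mono⟩ := q
  obtain rfl : K = K' := hK
  obtain rfl : κ = κ' := (hκmono.range_inj hκ'mono).mp hκ
  rfl

theorem ncard_range (p : KIdx n) : (Set.range p.2.1).ncard = p.1.card := by
  rw [Set.ncard_range_of_injective p.2.2.injective, Nat.card_eq_finsetCard]

theorem range_pivot_injective : Function.Injective fun p : KIdx n => Set.range p.pivot := by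
  intro p q h
  refine ext_of_range_eq (Finset.ext fun i => ?_) (Set.ext fun b => ?_)
  · simpa only [inl_mem_range_pivot, not_iff_not] using Set.ext_iff.mp h (.inl i)
  · simpa only [inr_mem_range_pivot] using Set.ext_iff.mp h (.inr b)

theorem exists_range_pivot_eq (s : Finset (Fin n ⊕ Fin n)) (hs : s.card = n) :
    ∃ p : KIdx n, Set.range p.pivot = s := by
  have hcard : s.toRight.card = s.toLeftᶜ.card := by
    have := s.card_toLeft_add_card_toRight
    rw [Finset.card_compl, Fintype.card_fin]
    omega
  let κ : {i // i ∈ s.toLeftᶜ} ≃o {b // b ∈ s.toRight} :=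
    (s.toLeftᶜ.orderIsoOfFin rfl).symm.trans (s.toRight.orderIsoOfFin hcard)
  obtain ⟨p, hK, hκ⟩ : ∃ p : KIdx n, p.1 = s.toLeftᶜ ∧ Set.range p.2.1 = s.toRight :=
    ⟨⟨_, Subtype.val ∘ κ, (Subtype.strictMono_coe _).comp κ.strictMono⟩, rfl, by
      rw [Set.range_comp, κ.range_eq, Set.image_univ, Subtype.range_coe]⟩
  refine ⟨p, ?_⟩
  ext (i | b)
  · rw [inl_mem_range_pivot, hK, Finset.mem_coe, Finset.mem_compl, not_not, Finset.mem_toLeft]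
  · rw [inr_mem_range_pivot, hκ, Finset.mem_coe, Finset.mem_coe, Finset.mem_toRight]

noncomputable def equivPowersetCard : KIdx n ≃ Set.powersetCard (Fin n ⊕ Fin n) n :=
  Equiv.ofBijective
    (fun p => ⟨Finset.univ.image p.pivot, by
      rw [Set.powersetCard.mem_iff, Finset.card_image_of_injective _ p.pivot_injective,
        Finset.card_univ, Fintype.card_fin]⟩)
    ⟨fun p q h => range_pivot_injective <| by
      simpa using congrArg (fun t : Finset _ => (t : Set (Fin n ⊕ Fin n))) (Subtype.ext_iff.mp h),
     fun s => by
      obtain ⟨p, hp⟩ := exists_range_pivot_eq s.1 s.2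
      exact ⟨p, Subtype.ext (Finset.coe_injective (by simpa using hp))⟩⟩

theorem range_pivot (p : KIdx n) : Set.range p.pivot = equivPowersetCard p := by
  change _ = ((Finset.univ.image p.pivot : Finset _) : Set (Fin n ⊕ Fin n))
  rw [Finset.coe_image, Finset.coe_univ, Set.image_univ]

end KIdx

section

variable {n : ℕ}

theorem vFun_apply_inl (q : KIdx n) (i a : Fin n) :
    vFun n q i (.inl a) = if i = a then 1 else 0 := by
  unfold vFun eVec xVec
  split_ifs <;> simp [*]

theorem vFun_apply_inr (q : KIdx n) (i b : Fin n) :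
    vFun n q i (.inr b) = if h : i ∈ q.1 then if q.2.1 ⟨i, h⟩ = b then 1 else 0 else 0 := by
  unfold vFun eVec xVec
  split_ifs <;> simp [*]

theorem vFun_apply_pivot (q : KIdx n) (i j : Fin n) :
    vFun n q i (q.pivot j) = if i = j then 1 else 0 := by
  by_cases hj : j ∈ q.1
  · rw [KIdx.pivot, dif_pos hj, vFun_apply_inr]
    by_cases hi : i ∈ q.1
    · simp only [dif_pos hi, q.2.2.injective.eq_iff, Subtype.mk.injEq]
    · rw [dif_neg hi, if_neg (ne_of_mem_of_not_mem hj hi).symm]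
  · rw [KIdx.pivot, dif_neg hj, vFun_apply_inl]

theorem det_vFun_pivot (p q : KIdx n) (hcard : q.1.card ≤ p.1.card) :
    (Matrix.of fun i j => vFun n q i (p.pivot j)).det = if p = q then 1 else 0 := by
  by_cases hsub : Set.range p.2.1 ⊆ Set.range q.2.1
  · have hrange : Set.range p.2.1 = Set.range q.2.1 := by
      refine Set.eq_of_subset_of_ncard_le hsub ?_
      rwa [KIdx.ncard_range, KIdx.ncard_range]
    by_cases hK : p.1 = q.1
    · obtain rfl := KIdx.ext_of_range_eq hK hrange
      rw [if_pos rfl, ← Matrix.det_one (n := Fin n) (R := ℤ)]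
      congr 1
      ext i j
      rw [Matrix.of_apply, vFun_apply_pivot, Matrix.one_apply]
    · rw [if_neg fun h : p = q => hK (h ▸ rfl)]
      obtain ⟨j', hj'q, hj'p⟩ : ∃ j' ∈ q.1, j' ∉ p.1 := Finset.not_subset.mp fun h =>
        hK (Finset.eq_of_subset_of_card_le h <| by
          rw [← KIdx.ncard_range, ← KIdx.ncard_range, hrange]).symm
      obtain ⟨⟨j, hjp⟩, hj⟩ : q.2.1 ⟨j', hj'q⟩ ∈ Set.range p.2.1 := hrange ▸ ⟨_, rfl⟩
      -- columns `j` and `j'` are both the unit vector at `j'`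
      have hpivot : p.pivot j = q.pivot j' := by simp [KIdx.pivot, hjp, hj'q, hj]
      refine Matrix.det_zero_of_column_eq (ne_of_mem_of_not_mem hjp hj'p) fun i => ?_
      rw [Matrix.of_apply, Matrix.of_apply, hpivot, vFun_apply_pivot, KIdx.pivot, dif_neg hj'p,
        vFun_apply_inl]
  · rw [if_neg fun h : p = q => hsub (h ▸ subset_rfl)]
    obtain ⟨_, ⟨⟨j, hj⟩, rfl⟩, hb⟩ := Set.not_subset.mp hsub
    refine Matrix.det_eq_zero_of_column_eq_zero j fun i => ?_
    rw [Matrix.of_apply, KIdx.pivot, dif_pos hj, vFun_apply_inr]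
    split_ifs with hi h
    · exact absurd ⟨_, h⟩ hb
    all_goals rfl

theorem det_minors_vFun :
    (Matrix.of fun p q : KIdx n => (Matrix.of fun i j => vFun n q i (p.pivot j)).det).det = 1 :=
  Matrix.det_eq_one_of_forall_le _ (fun p => p.1.card) fun p q h => by
    rw [Matrix.of_apply, det_vFun_pivot p q h, Matrix.one_apply]

end

theorem stmt2_general (n : ℕ) :
    ∃ b : Module.Basis (KIdx n) ℤ (⋀[ℤ]^n ((Fin n ⊕ Fin n) → ℤ)),
      ∀ p : KIdx n,
        (b p : ExteriorAlgebra ℤ ((Fin n ⊕ Fin n) → ℤ)) = ιMulti ℤ n (vFun n p) := by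
  obtain ⟨b, hb⟩ := (Pi.basisFun ℤ (Fin n ⊕ Fin n)).exists_basis_of_isUnit_det_minors
    KIdx.equivPowersetCard KIdx.pivot KIdx.pivot_injective KIdx.range_pivot
    (fun p => exteriorPower.ιMulti ℤ n (vFun n p)) <| by
      simp only [exteriorPower.alternatingMapToDual_apply_ιMulti, Module.Basis.coord_apply,
        Pi.basisFun_repr, det_minors_vFun, isUnit_one]
  exact ⟨b, fun p => by rw [hb]; rfl⟩

/-- the family `{v_{(K,κ)}}` is a basis of the `ℤ`-module `Λ^n L`, where `L` is
free of rank `2n` with basis `{e₁,…,eₙ,x₁,…,xₙ}`. -/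
theorem stmt2 (n : ℕ) (hn : 1 ≤ n) :
    ∃ b : Module.Basis (KIdx n) ℤ (⋀[ℤ]^n ((Fin n ⊕ Fin n) → ℤ)),
      ∀ p : KIdx n,
        (b p : ExteriorAlgebra ℤ ((Fin n ⊕ Fin n) → ℤ)) = ιMulti ℤ n (vFun n p) :=
  stmt2_general n
end

section
/- Let A be a commutative ring and φ a continuous A-algebra endomorphism of A((t)) with φ(t) = g, ν(g) = d ≥ 1 pointwise on Spec A (assume Spec A connected so d ∈ ℤ). Then for every ω = f dt ∈ Ω̃¹_{A((t))}, one has res(φ(ω)) = d · res(ω), where φ(f dt) := φ(f) g' dt. -/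
/-- The formal derivative `d/dt` of a Laurent series. -/
noncomputable def lderiv {A : Type*} [CommRing A] (f : LaurentSeries A) : LaurentSeries A where
  coeff l := (l + 1) • f.coeff (l + 1)
  isPWO_support' := by
    refine Set.IsPWO.mono ((f.isPWO_support.image_of_monotone
      (f := fun l : ℤ => l - 1) (fun a b h => by simpa using h))) ?_
    intro l hl
    have h1 : f.coeff (l + 1) ≠ 0 := by
      intro h; simp [Function.mem_support, h] at hl
    exact ⟨l + 1, h1, by ring⟩

/-- A sequence of Laurent series tends to `0` in the `t`-adic (Laurent series) topology. -/
def LSTendsToZero {A : Type*} [CommRing A] (s : ℕ → LaurentSeries A) : Prop :=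
  ∀ N : ℤ, ∃ I : ℕ, ∀ i ≥ I, ∀ l < N, (s i).coeff l = 0

/-!
The functional `f ↦ res (φ f · g')` is `A`-linear and, because `φ` is continuous and `g'` is
bounded below, it only sees a finite truncation of `f`; so it is determined by its values on the
monomials `tⁿ`. As `t` is a unit, `φ (tⁿ) = gⁿ` for all `n : ℤ`, and `res (gⁿ g') = 0` for `n ≠ -1`:
for `n ≥ 0` since `(n + 1) gⁿ g' = (gⁿ⁺¹)'` has no residue, and for `n ≤ -2` by the same fact for
`g⁻¹`. The remaining value `res (g⁻¹ g')` is additive in the unit `g`; it is `d` on `t ^ d`, and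
`0` on units of `A⟦t⟧` (no negative powers occur) and on `1 + N` with `N` nilpotent (where
`(1 + N)⁻¹` is a finite geometric series in `-N`, reducing to the case `n ≥ 0`).
-/

open HahnSeries

section

variable {A : Type*} [CommRing A]

/-- The Euler operator `t · d/dt`: its Leibniz rule needs no reindexing, since `l = i + j` on the
antidiagonal. -/
noncomputable def eulerOp (x : LaurentSeries A) : LaurentSeries A where
  coeff l := l • x.coeff l
  isPWO_support' := x.isPWO_support.mono fun l hl h => hl (by simp [h])

lemma support_eulerOp_subset (x : LaurentSeries A) : (eulerOp x).support ⊆ x.support :=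
  fun l hl h => hl (by simp [eulerOp, h])

lemma eulerOp_mul (x y : LaurentSeries A) :
    eulerOp (x * y) = eulerOp x * y + x * eulerOp y := by
  ext l
  rw [coeff_add, coeff_mul_left' x.isPWO_support (support_eulerOp_subset x),
    coeff_mul_right' y.isPWO_support (support_eulerOp_subset y), ← Finset.sum_add_distrib]
  change l • (x * y).coeff l = _
  rw [coeff_mul, Finset.smul_sum]
  refine Finset.sum_congr rfl fun ij hij => ?_
  rw [← (Finset.mem_antidiagonal.mp hij).2.2]
  simp only [eulerOp, add_smul, smul_mul_assoc, mul_smul_comm]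

lemma lderiv_eq_single_mul_eulerOp (x : LaurentSeries A) :
    lderiv x = single (-1) 1 * eulerOp x := by
  ext l
  rw [coeff_single_mul, one_mul, sub_neg_eq_add]
  rfl

lemma lderiv_mul (x y : LaurentSeries A) : lderiv (x * y) = lderiv x * y + x * lderiv y := by
  simp only [lderiv_eq_single_mul_eulerOp, eulerOp_mul]
  ring

lemma lderiv_add (x y : LaurentSeries A) : lderiv (x + y) = lderiv x + lderiv y := by
  ext l
  simp [lderiv, smul_add]

lemma lderiv_neg (x : LaurentSeries A) : lderiv (-x) = -lderiv x := by
  ext l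
  simp [lderiv]

lemma lderiv_one : lderiv (1 : LaurentSeries A) = 0 := by
  simpa using lderiv_mul (1 : LaurentSeries A) 1

lemma coeff_lderiv_neg_one (x : LaurentSeries A) : (lderiv x).coeff (-1) = 0 := by
  simp [lderiv]

lemma lderiv_pow_succ (x : LaurentSeries A) (n : ℕ) :
    lderiv (x ^ (n + 1)) = (n + 1) • (x ^ n * lderiv x) := by
  induction n with
  | zero => simp
  | succ n ih =>
    rw [pow_succ, lderiv_mul, ih]
    simp only [nsmul_eq_mul]
    push_cast
    ring

lemma coeff_pow_mul_lderiv_of_isAddTorsionFree [IsAddTorsionFree A] (x : LaurentSeries A)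
    (n : ℕ) : (x ^ n * lderiv x).coeff (-1) = 0 := by
  have h := congrArg (coeff · (-1)) (lderiv_pow_succ x n)
  simp only [coeff_lderiv_neg_one, coeff_nsmul, Pi.smul_apply] at h
  exact (nsmul_eq_zero_iff_right n.succ_ne_zero).mp h.symm

section CoefficientChange

variable {R : Type*} [CommRing R]

noncomputable def mapRingHom (f : R →+* A) : LaurentSeries R →+* LaurentSeries A where
  toFun x := x.map f
  map_one' := HahnSeries.map_one f.toMonoidWithZeroHom
  map_mul' _ _ := HahnSeries.map_mul f.toNonUnitalRingHom
  map_zero' := HahnSeries.map_zero f.toMonoidWithZeroHom.toZeroHom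
  map_add' _ _ := HahnSeries.map_add f.toAddMonoidHom

@[simp]
lemma coeff_mapRingHom (f : R →+* A) (x : LaurentSeries R) (l : ℤ) :
    (mapRingHom f x).coeff l = f (x.coeff l) := rfl

lemma lderiv_mapRingHom (f : R →+* A) (x : LaurentSeries R) :
    lderiv (mapRingHom f x) = mapRingHom f (lderiv x) := by
  ext l
  simp [lderiv]

lemma exists_mapRingHom_eq (x : LaurentSeries A) :
    ∃ (X : LaurentSeries (MvPolynomial ℤ ℤ)) (f : MvPolynomial ℤ ℤ →+* A), mapRingHom f X = x := by
  classical
  refine ⟨⟨fun l => if x.coeff l = 0 then 0 else MvPolynomial.X l,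
    x.isPWO_support.mono fun l hl h => hl (by simp [h])⟩,
    (MvPolynomial.aeval x.coeff).toRingHom, ?_⟩
  ext l
  by_cases h : x.coeff l = 0 <;> simp [h]

end CoefficientChange

/-- Over `ℤ[X_l]` the factor `n + 1` in `(xⁿ⁺¹)' = (n + 1) xⁿ x'` can be cancelled; every `x` is the
image of such a generic series. -/
lemma coeff_pow_mul_lderiv (x : LaurentSeries A) (n : ℕ) : (x ^ n * lderiv x).coeff (-1) = 0 := by
  obtain ⟨X, f, rfl⟩ := exists_mapRingHom_eq x
  rw [lderiv_mapRingHom, ← map_pow, ← map_mul, coeff_mapRingHom,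
    coeff_pow_mul_lderiv_of_isAddTorsionFree, map_zero]

noncomputable def dlog (G : (LaurentSeries A)ˣ) : LaurentSeries A :=
  (G⁻¹ : (LaurentSeries A)ˣ) * lderiv (G : LaurentSeries A)

lemma dlog_mul (G H : (LaurentSeries A)ˣ) : dlog (G * H) = dlog G + dlog H := by
  have hG := G.inv_mul
  have hH := H.inv_mul
  simp only [dlog, mul_inv_rev, Units.val_mul, lderiv_mul]
  linear_combination (↑G⁻¹ : LaurentSeries A) * lderiv (↑G : LaurentSeries A) * hH +
    (↑H⁻¹ : LaurentSeries A) * lderiv (↑H : LaurentSeries A) * hG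

lemma lderiv_inv (G : (LaurentSeries A)ˣ) :
    lderiv (↑G⁻¹ : LaurentSeries A) = -((↑G⁻¹ : LaurentSeries A) ^ 2 * lderiv ↑G) := by
  have h := congrArg lderiv G.inv_mul
  rw [lderiv_mul, lderiv_one] at h
  linear_combination (↑G⁻¹ : LaurentSeries A) * h - lderiv (↑G⁻¹ : LaurentSeries A) * G.inv_mul

lemma coeff_zpow_mul_lderiv (G : (LaurentSeries A)ˣ) (n : ℤ) :
    ((G ^ n : (LaurentSeries A)ˣ) * lderiv (G : LaurentSeries A)).coeff (-1) =
      if n = -1 then (dlog G).coeff (-1) else 0 := by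
  match n with
  | Int.ofNat k =>
    rw [Int.ofNat_eq_natCast, zpow_natCast, Units.val_pow_eq_pow_val, coeff_pow_mul_lderiv,
      if_neg (by omega)]
  | Int.negSucc 0 => simp [dlog]
  | Int.negSucc (k + 1) =>
    have h : ((G ^ Int.negSucc (k + 1) : (LaurentSeries A)ˣ) : LaurentSeries A) * lderiv G =
        -((↑G⁻¹ : LaurentSeries A) ^ k * lderiv (↑G⁻¹ : LaurentSeries A)) := by
      rw [zpow_negSucc, ← inv_pow, Units.val_pow_eq_pow_val, lderiv_inv]
      ring
    rw [h, coeff_neg, coeff_pow_mul_lderiv, neg_zero, if_neg (by omega)]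

noncomputable def tUnit : (LaurentSeries A)ˣ where
  val := single 1 1
  inv := single (-1) 1
  val_inv := by simp [single_mul_single]
  inv_val := by simp [single_mul_single]

lemma coe_tUnit_zpow (n : ℤ) :
    ((tUnit ^ n : (LaurentSeries A)ˣ) : LaurentSeries A) = single n 1 := by
  induction n using Int.induction_on with
  | zero => simp
  | succ n ih =>
    rw [zpow_add_one, Units.val_mul, ih]
    simp [tUnit, single_mul_single]
  | pred n ih =>
    rw [zpow_sub_one, Units.val_mul, ih]
    simp [tUnit, single_mul_single, sub_eq_add_neg]

lemma coeff_dlog_tUnit_zpow (d : ℤ) : (dlog (tUnit ^ d : (LaurentSeries A)ˣ)).coeff (-1) = d := by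
  rw [dlog, ← zpow_neg, coe_tUnit_zpow, coe_tUnit_zpow, coeff_single_mul]
  simp [lderiv]

lemma coeff_mul_eq_zero_of_lt_add {x y : LaurentSeries A} {a b l : ℤ}
    (hx : ∀ i < a, x.coeff i = 0) (hy : ∀ j < b, y.coeff j = 0) (hl : l < a + b) :
    (x * y).coeff l = 0 := by
  rw [coeff_mul]
  refine Finset.sum_eq_zero fun ij hij => ?_
  rcases lt_or_ge ij.1 a with hi | hi
  · rw [hx _ hi, zero_mul]
  · rw [hy _ (by linarith [(Finset.mem_antidiagonal.mp hij).2.2]), mul_zero]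

lemma coeff_lderiv_ofPowerSeries_of_neg (q : PowerSeries A) {l : ℤ} (hl : l < 0) :
    (lderiv (ofPowerSeries ℤ A q)).coeff l = 0 := by
  change (l + 1) • (ofPowerSeries ℤ A q).coeff (l + 1) = 0
  rcases eq_or_lt_of_le (show l + 1 ≤ 0 by omega) with h | h
  · rw [h, zero_smul]
  · rw [PowerSeries.coeff_coe, if_pos h, smul_zero]

lemma coeff_dlog_ofPowerSeries (W : (PowerSeries A)ˣ) :
    (dlog (Units.map (ofPowerSeries ℤ A : PowerSeries A →* LaurentSeries A) W)).coeff (-1) = 0 :=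
  coeff_mul_eq_zero_of_lt_add (a := 0) (b := 0)
    (fun _ hi => by simp [PowerSeries.coeff_coe, hi])
    (fun _ => coeff_lderiv_ofPowerSeries_of_neg _) (by norm_num)

lemma coeff_dlog_one_add {N : LaurentSeries A} (hN : IsNilpotent N) :
    (dlog hN.isUnit_one_add.unit).coeff (-1) = 0 := by
  obtain ⟨K, hK⟩ := hN.neg
  have hinv : ((hN.isUnit_one_add.unit⁻¹ : (LaurentSeries A)ˣ) : LaurentSeries A) =
      ∑ k ∈ Finset.range K, (-N) ^ k := by
    apply Units.inv_eq_of_mul_eq_one_right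
    simpa [hK, sub_neg_eq_add] using mul_neg_geom_sum (-N) K
  have hsum : dlog hN.isUnit_one_add.unit = -∑ k ∈ Finset.range K, (-N) ^ k * lderiv (-N) := by
    rw [dlog, hinv, IsUnit.unit_spec, lderiv_add, lderiv_one, zero_add, lderiv_neg,
      Finset.sum_mul, ← Finset.sum_neg_distrib]
    simp
  simp [hsum, coeff_pow_mul_lderiv]

lemma coeff_dlog_eq_of_coe_eq (G : (LaurentSeries A)ˣ) (d : ℤ) (W : (PowerSeries A)ˣ)
    {N : LaurentSeries A} (hN : IsNilpotent N)
    (hG : (G : LaurentSeries A) = single d 1 * ofPowerSeries ℤ A W * (1 + N)) :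
    (dlog G).coeff (-1) = d := by
  have hsplit : G = tUnit ^ d * Units.map (ofPowerSeries ℤ A : PowerSeries A →* LaurentSeries A) W *
      hN.isUnit_one_add.unit := Units.ext (by simp [hG, coe_tUnit_zpow])
  rw [hsplit, dlog_mul, dlog_mul, coeff_add, coeff_add, coeff_dlog_tUnit_zpow,
    coeff_dlog_ofPowerSeries, coeff_dlog_one_add hN, add_zero, add_zero]

noncomputable def truncBelow (f : LaurentSeries A) (n : ℤ) : LaurentSeries A :=
  ∑ l ∈ Finset.Ico f.order n, single l (f.coeff l)

lemma coeff_truncBelow (f : LaurentSeries A) (n l : ℤ) :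
    (truncBelow f n).coeff l = if l < n then f.coeff l else 0 := by
  rw [truncBelow, coeff_sum]
  by_cases hl : l ∈ Finset.Ico f.order n
  · rw [Finset.sum_eq_single_of_mem l hl fun k _ hk => coeff_single_of_ne hk.symm,
      coeff_single_same, if_pos (Finset.mem_Ico.mp hl).2]
  · rw [Finset.sum_eq_zero fun k hk => coeff_single_of_ne (ne_of_mem_of_not_mem hk hl).symm]
    rw [Finset.mem_Ico, not_and_or, not_le] at hl
    split_ifs with h
    · exact (coeff_eq_zero_of_lt_order (hl.resolve_right (not_not.mpr h))).symm
    · rfl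

lemma tendsToZero_sub_truncBelow (f : LaurentSeries A) :
    LSTendsToZero fun i : ℕ => f - truncBelow f i :=
  fun N => ⟨N.toNat, fun i hi l hl => by
    rw [coeff_sub, coeff_truncBelow, if_pos (by omega), sub_self]⟩

lemma algebraMap_laurentSeries_apply (r : A) : algebraMap A (LaurentSeries A) r = C r := by
  rw [algebraMap_apply', PowerSeries.algebraMap_apply, Algebra.algebraMap_self_apply,
    ofPowerSeries_C]

lemma single_eq_algebraMap_mul_single (l : ℤ) (r : A) :
    single l r = algebraMap A (LaurentSeries A) r * single l 1 := by
  rw [algebraMap_laurentSeries_apply, C_apply, single_mul_single, zero_add, mul_one]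

lemma coeff_map_truncBelow_mul (φ : LaurentSeries A →ₐ[A] LaurentSeries A) (w : LaurentSeries A)
    (c : A) (hw : ∀ n : ℤ, (φ (single n 1) * w).coeff (-1) = if n = -1 then c else 0)
    (f : LaurentSeries A) {n : ℤ} (hn : 0 ≤ n) :
    (φ (truncBelow f n) * w).coeff (-1) = c * f.coeff (-1) := by
  have hterm : ∀ l, (φ (single l (f.coeff l)) * w).coeff (-1) =
      if l = -1 then c * f.coeff (-1) else 0 := by
    intro l
    rw [single_eq_algebraMap_mul_single, map_mul, AlgHom.commutes, algebraMap_laurentSeries_apply,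
      mul_assoc, C_mul_eq_smul, coeff_smul, hw, smul_eq_mul]
    split_ifs with h
    · rw [h, mul_comm]
    · rw [mul_zero]
  rw [truncBelow, map_sum, Finset.sum_mul, coeff_sum, Finset.sum_congr rfl fun l _ => hterm l,
    Finset.sum_ite_eq']
  split_ifs with h
  · rfl
  · have horder : -1 < f.order := by
      simp only [Finset.mem_Ico, not_and, not_lt] at h
      omega
    rw [coeff_eq_zero_of_lt_order horder, mul_zero]

lemma coeff_map_mul_of_continuous (φ : LaurentSeries A →ₐ[A] LaurentSeries A)
    (w : LaurentSeries A) (c : A)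
    (hw : ∀ n : ℤ, (φ (single n 1) * w).coeff (-1) = if n = -1 then c else 0)
    (hφ : ∀ s : ℕ → LaurentSeries A, LSTendsToZero s → LSTendsToZero fun i => φ (s i))
    (f : LaurentSeries A) : (φ f * w).coeff (-1) = c * f.coeff (-1) := by
  obtain ⟨I, hI⟩ := hφ _ (tendsToZero_sub_truncBelow f) (-w.order)
  have htail : (φ (f - truncBelow f I) * w).coeff (-1) = 0 :=
    coeff_mul_eq_zero_of_lt_add (hI I le_rfl) (fun _ => coeff_eq_zero_of_lt_order) (by omega)
  calc (φ f * w).coeff (-1)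
      = (φ (truncBelow f I) * w).coeff (-1) + (φ (f - truncBelow f I) * w).coeff (-1) := by
        rw [← coeff_add, ← add_mul, ← map_add, add_sub_cancel]
    _ = c * f.coeff (-1) := by
        rw [htail, add_zero, coeff_map_truncBelow_mul φ w c hw f (Int.natCast_nonneg I)]

end

theorem stmt17_general (A : Type*) [CommRing A] (d : ℤ)
    (u : Aˣ) (a : PowerSeries A) (gm : LaurentSeries A)
    (hgmnil : IsNilpotent gm)
    (g : LaurentSeries A)
    (hg : g = HahnSeries.single d 1 * HahnSeries.C (u : A) *
      HahnSeries.ofPowerSeries ℤ A (1 + PowerSeries.X * a) * (1 + gm))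
    (φ : LaurentSeries A →ₐ[A] LaurentSeries A)
    (hcont : ∀ s : ℕ → LaurentSeries A, LSTendsToZero s → LSTendsToZero (fun i => φ (s i)))
    (hφt : φ (HahnSeries.single (1 : ℤ) 1) = g) :
    ∀ f : LaurentSeries A, (φ f * lderiv g).coeff (-1) = d • f.coeff (-1) := by
  intro f
  set G := Units.map (φ : LaurentSeries A →* LaurentSeries A) tUnit
  have hG : (G : LaurentSeries A) = g := hφt
  have ha : IsUnit (1 + PowerSeries.X * a) := PowerSeries.isUnit_iff_constantCoeff.mpr (by simp)
  have hdlog : (dlog G).coeff (-1) = d := by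
    refine coeff_dlog_eq_of_coe_eq G d
      (Units.map (PowerSeries.C : A →+* PowerSeries A).toMonoidHom u * ha.unit) hgmnil ?_
    rw [hG, hg]
    simp only [Units.val_mul, Units.coe_map, IsUnit.unit_spec, map_mul, RingHom.toMonoidHom_eq_coe,
      MonoidHom.coe_coe, ofPowerSeries_C]
    ring
  rw [zsmul_eq_mul, ← hdlog, ← hG]
  refine coeff_map_mul_of_continuous φ _ _ (fun n => ?_) hcont f
  have hpow : φ (single n 1) = ↑(G ^ n) := by
    rw [← coe_tUnit_zpow, ← map_zpow, Units.coe_map]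
    rfl
  rw [hpow, coeff_zpow_mul_lderiv]

/-- let `φ` be a continuous `A`-algebra endomorphism of `A((t))` with
`φ(t) = g`, where `g = t^d·u·(1+g₊)·(1+g₋)` with `d ≥ 1` (i.e. `ν(g) = d`). Then for every
`ω = f dt`, `res(φ(ω)) = d·res(ω)`, where `φ(f dt) := φ(f)·g' dt`. -/
theorem stmt17 (A : Type*) [CommRing A] (d : ℤ) (hd : 1 ≤ d)
    (u : Aˣ) (a : PowerSeries A) (gm : LaurentSeries A)
    (hgmnil : IsNilpotent gm) (hgmneg : ∀ l : ℤ, 0 ≤ l → gm.coeff l = 0)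
    (g : LaurentSeries A)
    (hg : g = HahnSeries.single d 1 * HahnSeries.C (u : A) *
      HahnSeries.ofPowerSeries ℤ A (1 + PowerSeries.X * a) * (1 + gm))
    (φ : LaurentSeries A →ₐ[A] LaurentSeries A)
    (hcont : ∀ s : ℕ → LaurentSeries A, LSTendsToZero s → LSTendsToZero (fun i => φ (s i)))
    (hφt : φ (HahnSeries.single (1 : ℤ) 1) = g) :
    ∀ f : LaurentSeries A, (φ f * lderiv g).coeff (-1) = d • f.coeff (-1) :=
  stmt17_general A d u a gm hgmnil g hg φ hcont hφt
end
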